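/- Let H̃ ≅ H ⊗ R be a minimal model with dim_k H nonzero and finite, equipped with the filtration F_* of Definition 3.1. Then for every i = 1,...,ℓ(F_*(H̃)) the boundary d̄: F_i(H̃) → F_{i-1}(H̃) induces a non-trivial map from F_i(H̃)/F_{i-1}(H̃) to F_{i-1}(H̃)/F_{i-2}(H̃) (for all i for which the target is nonzero, i.e. i ≥ 2). -/

import Mathlib

/-!
Statement 9 (Proposition 3.2(d)): let `H̃ ≅ H ⊗ R` be a minimal model with `dim_k H`
nonzero and finite, equipped with the filtration `F_*` of Definition 3.1
(`F₀(H̃) = 0`, `F_{i+1}(H) = d̄⁻¹(F_i(H̃)) ∩ (H ⊗ k)`, `F_{i+1}(H̃) = F_{i+1}(H) ⊗ R`).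
Then for every `i = 1, …, ℓ(F_*(H̃))` the boundary `d̄ : F_i(H̃) → F_{i-1}(H̃)` induces a
non-trivial map `F_i(H̃)/F_{i-1}(H̃) → F_{i-1}(H̃)/F_{i-2}(H̃)` (for all `i` for which the
target is nonzero, i.e. `i ≥ 2`); non-triviality is expressed by the existence of
`z ∈ F_i(H̃)` with `d̄ z ∉ F_{i-2}(H̃)`.
-/


open MvPolynomial TensorProduct

/-- `R = k[t₁,…,t_r]`, graded with `deg tᵢ = 1`. -/
abbrev Rp (k : Type*) [Field k] (r : ℕ) := MvPolynomial (Fin r) k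

variable (k : Type*) [Field k] (r : ℕ)
variable (H : Type*) [AddCommGroup H] [Module k H]

/-- `x ↦ 1 ⊗ x : H → R ⊗ H`. -/
noncomputable def toT : H →ₗ[k] Rp k r ⊗[k] H := TensorProduct.mk k (Rp k r) H 1

/-- The augmentation `R → k`, `tᵢ ↦ 0`. -/
noncomputable def εR : Rp k r →ₗ[k] k := (aeval fun _ : Fin r => (0 : k)).toLinearMap

/-- The degree-`n` graded piece of `H̃ = R ⊗ₖ H` (`deg tᵢ = 1`), where `g` is the grading
of `H`: it is spanned by the tensors `q ⊗ x` with `q` homogeneous of degree `d`, `x ∈ H^j`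
and `d + j = n`. -/
noncomputable def gradedPiece (g : ℤ → Submodule k H) (n : ℤ) :
    Submodule k (Rp k r ⊗[k] H) :=
  Submodule.span k {z | ∃ (d : ℕ) (j : ℤ) (q : Rp k r) (x : H),
    q ∈ homogeneousSubmodule (Fin r) k d ∧ x ∈ g j ∧ (d : ℤ) + j = n ∧ z = q ⊗ₜ[k] x}

/-- The boundary `d̄` has total degree `1`. -/
def DegreeOne (g : ℤ → Submodule k H)
    (D : Rp k r ⊗[k] H →ₗ[Rp k r] Rp k r ⊗[k] H) : Prop :=
  ∀ (n : ℤ), ∀ z ∈ gradedPiece k r H g n, D z ∈ gradedPiece k r H g (n + 1)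

/-- The constant part of the boundary vanishes (`d̄ ⊗_R k = 0`), i.e. the complex is
minimal. -/
def MinimalB (D : Rp k r ⊗[k] H →ₗ[Rp k r] Rp k r ⊗[k] H) : Prop :=
  ∀ z : Rp k r ⊗[k] H, LinearMap.rTensor H (εR k r) (D z) = 0

/-- The `k`-linear extraction of the coefficient of `tᵢ`. -/
noncomputable def lcoeffR (i : Fin r) : Rp k r →ₗ[k] k where
  toFun q := coeff (Finsupp.single i 1) q
  map_add' p q := coeff_add _ p q
  map_smul' c p := coeff_smul _ c p

/-- `λᵢ : H → H`, the coefficient of `tᵢ` in `d̄(x)` (the linear part of the boundary). -/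
noncomputable def lam (D : Rp k r ⊗[k] H →ₗ[Rp k r] Rp k r ⊗[k] H) (i : Fin r) :
    H →ₗ[k] H :=
  (TensorProduct.lid k H).toLinearMap ∘ₗ LinearMap.rTensor H (lcoeffR k r i) ∘ₗ
    (D.restrictScalars k) ∘ₗ toT k r H

/-- The filtration `F_*` of Definition 3.1: `F₀(H) = 0` and
`F_{i+1}(H) = d̄⁻¹(F_i(H) ⊗ R) ∩ (H ⊗ k)`; `F_i(H̃) = F_i(H) ⊗ R` is its base change. -/
noncomputable def FH (D : Rp k r ⊗[k] H →ₗ[Rp k r] Rp k r ⊗[k] H) :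
    ℕ → Submodule k H
  | 0 => ⊥
  | i + 1 =>
    Submodule.comap ((D.restrictScalars k) ∘ₗ toT k r H)
      (Submodule.restrictScalars k ((FH D i).baseChange (Rp k r)))

/-- The length `ℓ(F_*(H̃))` of the filtration: the smallest `i` with `F_i = F_{i+1}`. -/
noncomputable def flen (D : Rp k r ⊗[k] H →ₗ[Rp k r] Rp k r ⊗[k] H) : ℕ :=
  sInf {i | FH k r H D i = FH k r H D (i + 1)}

/-- `(Λ⁺)^i H^q`: the iterates of the exterior-algebra action of `λ₁,…,λ_r` on `H^q`. -/
noncomputable def LPow (g : ℤ → Submodule k H)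
    (D : Rp k r ⊗[k] H →ₗ[Rp k r] Rp k r ⊗[k] H) (q : ℤ) : ℕ → Submodule k H
  | 0 => g q
  | i + 1 => ⨆ j : Fin r, (LPow g D q i).map (lam k r H D j)

/-- `ℓ_Λ(H^q)`: the least `i` with `(Λ⁺)^i H^q = 0`. -/
noncomputable def llen (g : ℤ → Submodule k H)
    (D : Rp k r ⊗[k] H →ₗ[Rp k r] Rp k r ⊗[k] H) (q : ℤ) : ℕ :=
  sInf {i | LPow k r H g D q i = ⊥}

section Filtration

variable {k r H} (D : Rp k r ⊗[k] H →ₗ[Rp k r] Rp k r ⊗[k] H)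

theorem mem_FH_succ_iff {i : ℕ} {x : H} :
    x ∈ FH k r H D (i + 1) ↔ D (1 ⊗ₜ x) ∈ (FH k r H D i).baseChange (Rp k r) :=
  Iff.rfl

theorem FH_monotone : Monotone (FH k r H D) := by
  refine monotone_nat_of_le_succ fun i => ?_
  induction i with
  | zero => exact bot_le
  | succ i ih =>
    exact Submodule.comap_mono fun _ hz => Submodule.baseChange_mono _ ih hz

theorem FH_lt_succ_of_lt_flen {i : ℕ} (hi : i < flen k r H D) :
    FH k r H D i < FH k r H D (i + 1) :=
  lt_of_le_of_ne (FH_monotone D i.le_succ) (Nat.notMem_of_lt_sInf hi)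

end Filtration

theorem statement9_general (k : Type*) [Field k] (r : ℕ)
    (H : Type*) [AddCommGroup H] [Module k H]
    (D : Rp k r ⊗[k] H →ₗ[Rp k r] Rp k r ⊗[k] H) :
    ∀ i : ℕ, 2 ≤ i → i ≤ flen k r H D →
      ∃ z ∈ (FH k r H D i).baseChange (Rp k r),
        D z ∉ (FH k r H D (i - 2)).baseChange (Rp k r) := by
  intro i h2 hle
  obtain ⟨j, rfl⟩ : ∃ j, i = j + 2 := ⟨i - 2, by omega⟩
  obtain ⟨x, hx, hx'⟩ := SetLike.exists_of_lt (FH_lt_succ_of_lt_flen D (i := j + 1) (by omega))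
  exact ⟨1 ⊗ₜ x, Submodule.tmul_mem_baseChange_of_mem _ hx,
    fun hD => hx' ((mem_FH_succ_iff D).2 hD)⟩

theorem statement9 (k : Type*) [Field k] (r : ℕ)
    (H : Type*) [AddCommGroup H] [Module k H]
    [FiniteDimensional k H] [Nontrivial H]
    (g : ℤ → Submodule k H) (hg : DirectSum.IsInternal g)
    (D : Rp k r ⊗[k] H →ₗ[Rp k r] Rp k r ⊗[k] H)
    (hDD : D ∘ₗ D = 0) (hdeg : DegreeOne k r H g D) (hmin : MinimalB k r H D) :
    ∀ i : ℕ, 2 ≤ i → i ≤ flen k r H D →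
      ∃ z ∈ (FH k r H D i).baseChange (Rp k r),
        D z ∉ (FH k r H D (i - 2)).baseChange (Rp k r) :=
  statement9_general k r H D
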